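/- Theorem 2 of the paper (Mixing in Deep Expander Networks, general version). Let n be a positive integer, and for i = 1,…,t let Aᵢ be an n×n real matrix with entries in {0,1} that is Dᵢ-biregular and has second singular value at most λᵢ. Then for all subsets S, T of Fin n, the number of paths from S to T through the t-layer network satisfies |∑_{v ∈ T} ∑_{u ∈ S} (A_t ⋯ A_1) v u − (∏ᵢ Dᵢ)·|S|·|T|/n| ≤ (∏ᵢ λᵢ)·√(|S|·|T|). -/

import Mathlib

/-!
The centred indicator vectors `x = 1_S - (|S|/n)·1` and `y = 1_T - (|T|/n)·1` are orthogonal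
to the all-ones vector, and for a biregular matrix `M` of degree `d` the path count minus its
expected value `d|S||T|/n` is exactly `⟪y, M x⟫`. Cauchy–Schwarz and `‖x‖² ≤ |S|`, `‖y‖² ≤ |T|`
give the expander mixing lemma for a single matrix. The layer product of `D i`-biregular
matrices is `∏ D i`-biregular, and since each layer keeps the mean-zero subspace invariant,
the bounds `lam i` on that subspace multiply.
-/

/-- The product of the layer matrices `A t * A (t-1) * ⋯ * A 1` of a deep network
(layers indexed `1, …, t`). -/
def layerProd {n : ℕ} (A : ℕ → Matrix (Fin n) (Fin n) ℝ) : ℕ → Matrix (Fin n) (Fin n) ℝ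
  | 0 => 1
  | k + 1 => A (k + 1) * layerProd A k

open Matrix Finset

variable {ι : Type*} [Fintype ι]

theorem abs_dotProduct_le_sqrt_mul_sqrt (x y : ι → ℝ) :
    |x ⬝ᵥ y| ≤ √(∑ i, x i ^ 2) * √(∑ i, y i ^ 2) := by
  rw [← Real.sqrt_mul (by positivity)]
  exact Real.abs_le_sqrt (sum_mul_sq_le_sq_mul_sq _ _ _)

section CenteredIndicator

variable [DecidableEq ι]

noncomputable def centeredIndicator (S : Finset ι) : ι → ℝ :=
  fun i => (if i ∈ S then 1 else 0) - S.card / Fintype.card ι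

theorem indicator_eq_centeredIndicator_add (S : Finset ι) :
    (fun i => if i ∈ S then (1 : ℝ) else 0) =
      centeredIndicator S + (S.card / Fintype.card ι : ℝ) • 1 := by
  ext i
  simp [centeredIndicator]

theorem sum_centeredIndicator (S : Finset ι) : ∑ i, centeredIndicator S i = 0 := by
  rcases isEmpty_or_nonempty ι with hι | hι
  · simp
  · simp only [centeredIndicator, sum_sub_distrib, sum_boole, sum_const, card_univ, nsmul_eq_mul]
    rw [mul_div_cancel₀ _ (Nat.cast_ne_zero.2 Fintype.card_ne_zero)]
    simp

theorem sum_centeredIndicator_sq_le (S : Finset ι) :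
    ∑ i, centeredIndicator S i ^ 2 ≤ S.card := by
  set c : ℝ := S.card / Fintype.card ι
  have hx : ∀ i, centeredIndicator S i = (if i ∈ S then 1 else 0) - c := fun _ => rfl
  calc ∑ i, centeredIndicator S i ^ 2
      = ∑ i, ((if i ∈ S then 1 else 0) * centeredIndicator S i - c * centeredIndicator S i) :=
        sum_congr rfl fun i _ => by rw [sq, hx i]; ring
    _ = ∑ i ∈ S, centeredIndicator S i - c * ∑ i, centeredIndicator S i := by
        rw [sum_sub_distrib, ← mul_sum]
        simp [ite_mul, sum_ite_mem]
    _ = ∑ i ∈ S, (1 - c) := by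
        rw [sum_centeredIndicator, mul_zero, sub_zero]
        exact sum_congr rfl fun i hi => by simp [hx, hi]
    _ ≤ S.card := by
        have : 0 ≤ c := by positivity
        simp only [sum_const, nsmul_eq_mul]
        nlinarith

end CenteredIndicator

namespace Matrix

section Sums

variable {l m n R : Type*} [NonUnitalNonAssocSemiring R]

theorem sum_row_mul_eq [Fintype m] [Fintype n] {A : Matrix l m R} {B : Matrix m n R} {a b : R}
    (hA : ∀ i, ∑ k, A i k = a) (hB : ∀ k, ∑ j, B k j = b) (i : l) :
    ∑ j, (A * B) i j = a * b := by
  simp only [mul_apply]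
  rw [sum_comm]
  simp only [← mul_sum, hB, ← sum_mul, hA]

theorem sum_col_mul_eq [Fintype l] [Fintype m] {A : Matrix l m R} {B : Matrix m n R} {a b : R}
    (hA : ∀ k, ∑ i, A i k = a) (hB : ∀ j, ∑ k, B k j = b) (j : n) :
    ∑ i, (A * B) i j = a * b := by
  simp only [mul_apply]
  rw [sum_comm]
  simp only [← sum_mul, hA, ← mul_sum, hB]

theorem sum_mulVec_eq [Fintype l] [Fintype n] {M : Matrix l n R} {d : R}
    (hcol : ∀ j, ∑ i, M i j = d) (x : n → R) : ∑ i, (M *ᵥ x) i = d * ∑ j, x j := by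
  simp only [mulVec, dotProduct]
  rw [sum_comm]
  simp only [← sum_mul, hcol, mul_sum]

end Sums

theorem mulVec_one_eq {m n R : Type*} [Fintype n] [NonAssocSemiring R] {M : Matrix m n R} {d : R}
    (hrow : ∀ i, ∑ j, M i j = d) : M *ᵥ 1 = fun _ => d := by
  ext i
  simp [mulVec, dotProduct, hrow]

def SecondSingularValueLE (M : Matrix ι ι ℝ) (lam : ℝ) : Prop :=
  ∀ x : ι → ℝ, ∑ j, x j = 0 → √(∑ i, (M *ᵥ x) i ^ 2) ≤ lam * √(∑ j, x j ^ 2)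

theorem SecondSingularValueLE.mul {A B : Matrix ι ι ℝ} {a b d : ℝ}
    (hA : A.SecondSingularValueLE a) (ha : 0 ≤ a) (hB : B.SecondSingularValueLE b)
    (hBcol : ∀ j, ∑ i, B i j = d) : (A * B).SecondSingularValueLE (a * b) := by
  intro x hx
  have hBx : ∑ i, (B *ᵥ x) i = 0 := by rw [sum_mulVec_eq hBcol, hx, mul_zero]
  calc √(∑ i, ((A * B) *ᵥ x) i ^ 2)
      ≤ a * √(∑ i, (B *ᵥ x) i ^ 2) := by rw [← mulVec_mulVec]; exact hA _ hBx
    _ ≤ a * (b * √(∑ j, x j ^ 2)) := mul_le_mul_of_nonneg_left (hB x hx) ha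
    _ = a * b * √(∑ j, x j ^ 2) := (mul_assoc _ _ _).symm

end Matrix

section Mixing

variable [DecidableEq ι] {M : Matrix ι ι ℝ} {d : ℝ}

theorem sum_sum_sub_eq_dotProduct_mulVec_centeredIndicator (hrow : ∀ i, ∑ j, M i j = d)
    (hcol : ∀ j, ∑ i, M i j = d) (S T : Finset ι) :
    ∑ v ∈ T, ∑ u ∈ S, M v u - d * S.card * T.card / Fintype.card ι =
      centeredIndicator T ⬝ᵥ M *ᵥ centeredIndicator S := by
  set c : ℝ := S.card / Fintype.card ι
  have hpaths : ∑ v ∈ T, ∑ u ∈ S, M v u =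
      (fun v => if v ∈ T then (1 : ℝ) else 0) ⬝ᵥ M *ᵥ fun u => if u ∈ S then 1 else 0 := by
    simp [dotProduct, mulVec, ite_mul, mul_ite, sum_ite_mem]
  have hconst : (fun v => if v ∈ T then (1 : ℝ) else 0) ⬝ᵥ M *ᵥ (c • 1) = c * d * T.card := by
    rw [mulVec_smul, mulVec_one_eq hrow]
    simp only [dotProduct, Pi.smul_apply, smul_eq_mul, ite_mul, one_mul, zero_mul, sum_ite_mem,
      univ_inter, sum_const, nsmul_eq_mul]
    ring
  have hcentered : (fun v => if v ∈ T then (1 : ℝ) else 0) ⬝ᵥ M *ᵥ centeredIndicator S =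
      centeredIndicator T ⬝ᵥ M *ᵥ centeredIndicator S := by
    rw [indicator_eq_centeredIndicator_add T, add_dotProduct, smul_dotProduct, one_dotProduct,
      sum_mulVec_eq hcol, sum_centeredIndicator, mul_zero, smul_zero, add_zero]
  rw [hpaths, indicator_eq_centeredIndicator_add S, mulVec_add, dotProduct_add, hconst,
    hcentered]
  ring

theorem expander_mixing_lemma {lam : ℝ} (hlam : 0 ≤ lam) (hrow : ∀ i, ∑ j, M i j = d)
    (hcol : ∀ j, ∑ i, M i j = d) (hM : M.SecondSingularValueLE lam) (S T : Finset ι) :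
    |∑ v ∈ T, ∑ u ∈ S, M v u - d * S.card * T.card / Fintype.card ι| ≤
      lam * √(S.card * T.card) := by
  rw [sum_sum_sub_eq_dotProduct_mulVec_centeredIndicator hrow hcol]
  calc |centeredIndicator T ⬝ᵥ M *ᵥ centeredIndicator S|
      ≤ √(∑ i, centeredIndicator T i ^ 2) * √(∑ i, (M *ᵥ centeredIndicator S) i ^ 2) :=
        abs_dotProduct_le_sqrt_mul_sqrt _ _
    _ ≤ √(T.card) * (lam * √(S.card)) := by
        gcongr
        · exact sum_centeredIndicator_sq_le T
        · exact (hM _ (sum_centeredIndicator S)).trans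
            (by gcongr; exact sum_centeredIndicator_sq_le S)
    _ = lam * √(S.card * T.card) := by
        rw [Real.sqrt_mul (Nat.cast_nonneg _)]
        ring

end Mixing

section LayerProd

variable {n t : ℕ} {A : ℕ → Matrix (Fin n) (Fin n) ℝ}

theorem sum_row_layerProd_eq {d : ℕ → ℝ} (hrow : ∀ i, 1 ≤ i → i ≤ t → ∀ v, ∑ u, A i v u = d i)
    {k : ℕ} (hk : k ≤ t) (v : Fin n) :
    ∑ u, layerProd A k v u = ∏ i ∈ Icc 1 k, d i := by
  induction k generalizing v with
  | zero => simp [layerProd, one_apply]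
  | succ k ih =>
    rw [layerProd, sum_row_mul_eq (hrow _ (Nat.le_add_left 1 k) hk) (ih (by omega)),
      prod_Icc_succ_top (by omega), mul_comm]

theorem sum_col_layerProd_eq {d : ℕ → ℝ} (hcol : ∀ i, 1 ≤ i → i ≤ t → ∀ u, ∑ v, A i v u = d i)
    {k : ℕ} (hk : k ≤ t) (u : Fin n) :
    ∑ v, layerProd A k v u = ∏ i ∈ Icc 1 k, d i := by
  induction k generalizing u with
  | zero => simp [layerProd, one_apply]
  | succ k ih =>
    rw [layerProd, sum_col_mul_eq (hcol _ (Nat.le_add_left 1 k) hk) (ih (by omega)),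
      prod_Icc_succ_top (by omega), mul_comm]

theorem secondSingularValueLE_layerProd {d lam : ℕ → ℝ}
    (hlam : ∀ i, 1 ≤ i → i ≤ t → 0 ≤ lam i)
    (hcol : ∀ i, 1 ≤ i → i ≤ t → ∀ u, ∑ v, A i v u = d i)
    (hsv : ∀ i, 1 ≤ i → i ≤ t → (A i).SecondSingularValueLE (lam i))
    {k : ℕ} (hk : k ≤ t) :
    (layerProd A k).SecondSingularValueLE (∏ i ∈ Icc 1 k, lam i) := by
  induction k with
  | zero => intro x _; simp [layerProd]
  | succ k ih =>
    rw [layerProd, prod_Icc_succ_top (by omega), mul_comm]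
    exact (hsv _ (Nat.le_add_left 1 k) hk).mul (hlam _ (Nat.le_add_left 1 k) hk) (ih (by omega))
      (sum_col_layerProd_eq hcol (by omega))

end LayerProd

theorem mixing_in_deep_expander_networks_general
    (n t : ℕ)
    (A : ℕ → Matrix (Fin n) (Fin n) ℝ) (D : ℕ → ℕ) (lam : ℕ → ℝ)
    (hlam : ∀ i, 1 ≤ i → i ≤ t → 0 ≤ lam i)
    (hrow : ∀ i, 1 ≤ i → i ≤ t → ∀ v, ∑ u, A i v u = D i)
    (hcol : ∀ i, 1 ≤ i → i ≤ t → ∀ u, ∑ v, A i v u = D i)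
    (hsv : ∀ i, 1 ≤ i → i ≤ t → ∀ x : Fin n → ℝ, (∑ j, x j) = 0 →
      Real.sqrt (∑ j, ((A i).mulVec x j) ^ 2) ≤ lam i * Real.sqrt (∑ j, (x j) ^ 2))
    (S T : Finset (Fin n)) :
    |(∑ v ∈ T, ∑ u ∈ S, layerProd A t v u) -
        (∏ i ∈ Finset.Icc 1 t, (D i : ℝ)) * S.card * T.card / n| ≤
      (∏ i ∈ Finset.Icc 1 t, lam i) * Real.sqrt ((S.card : ℝ) * T.card) := by
  have hprod_lam : 0 ≤ ∏ i ∈ Icc 1 t, lam i :=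
    prod_nonneg fun i hi => hlam i (mem_Icc.1 hi).1 (mem_Icc.1 hi).2
  simpa using expander_mixing_lemma hprod_lam (sum_row_layerProd_eq hrow le_rfl)
    (sum_col_layerProd_eq hcol le_rfl) (secondSingularValueLE_layerProd hlam hcol hsv le_rfl) S T

/-- Theorem 2 of the paper (Mixing in Deep Expander Networks, general version): if each
layer matrix `A i` (i = 1,…,t) is a 0/1, `D i`-biregular n×n matrix with second
singular value at most `lam i`, then for all subsets S, T of `Fin n`, the number of
paths from S to T through the t-layer network satisfies
`|∑_{v ∈ T} ∑_{u ∈ S} (A_t ⋯ A_1) v u − (∏ᵢ Dᵢ)·|S|·|T|/n| ≤ (∏ᵢ lamᵢ)·√(|S|·|T|)`. -/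
theorem mixing_in_deep_expander_networks
    (n t : ℕ) (hn : 0 < n)
    (A : ℕ → Matrix (Fin n) (Fin n) ℝ) (D : ℕ → ℕ) (lam : ℕ → ℝ)
    (hD : ∀ i, 1 ≤ i → i ≤ t → 0 < D i)
    (hlam : ∀ i, 1 ≤ i → i ≤ t → 0 ≤ lam i)
    (hA01 : ∀ i, 1 ≤ i → i ≤ t → ∀ v u, A i v u = 0 ∨ A i v u = 1)
    (hrow : ∀ i, 1 ≤ i → i ≤ t → ∀ v, ∑ u, A i v u = D i)
    (hcol : ∀ i, 1 ≤ i → i ≤ t → ∀ u, ∑ v, A i v u = D i)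
    (hsv : ∀ i, 1 ≤ i → i ≤ t → ∀ x : Fin n → ℝ, (∑ j, x j) = 0 →
      Real.sqrt (∑ j, ((A i).mulVec x j) ^ 2) ≤ lam i * Real.sqrt (∑ j, (x j) ^ 2))
    (S T : Finset (Fin n)) :
    |(∑ v ∈ T, ∑ u ∈ S, layerProd A t v u) -
        (∏ i ∈ Finset.Icc 1 t, (D i : ℝ)) * S.card * T.card / n| ≤
      (∏ i ∈ Finset.Icc 1 t, lam i) * Real.sqrt ((S.card : ℝ) * T.card) :=
  mixing_in_deep_expander_networks_general n t A D lam hlam hrow hcol hsv S T
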